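/- Define a bilinear multiplication on 𝕆 := ℝ⁷ × ℝ by (x,t)·(y,t') := (t·y + t'·x + x⋆y, t·t' − ⟨x,y⟩), where ⋆ is the cross product defined from the standard G₂ 3-form ρ₀ (this realizes 𝕆 as the octonion algebra, with ℝ⁷ its imaginary part). Then the Euclidean norm N(x,t) := |x|² + t² is multiplicative: N(a·b) = N(a)·N(b) for all a, b ∈ 𝕆. -/
import Mathlib


noncomputable section

/-- `eⁱ ∧ eʲ ∧ eᵏ` evaluated at `(x, y, z)` (a 3×3 determinant of coordinates). -/
def tripleForm (i j k : Fin 7) (x y z : Fin 7 → ℝ) : ℝ :=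
  x i * (y j * z k - y k * z j) - x j * (y i * z k - y k * z i)
    + x k * (y i * z j - y j * z i)

/-- The standard G₂ 3-form on ℝ⁷:
`ρ₀ = e¹∧e²∧e³ + e¹∧e⁴∧e⁵ + e¹∧e⁶∧e⁷ + e²∧e⁴∧e⁶ − e²∧e⁵∧e⁷ − e³∧e⁴∧e⁷ − e³∧e⁵∧e⁶`
(indices shifted down by one to `Fin 7`). -/
def rho (x y z : Fin 7 → ℝ) : ℝ :=
  tripleForm 0 1 2 x y z + tripleForm 0 3 4 x y z + tripleForm 0 5 6 x y z
    + tripleForm 1 3 5 x y z - tripleForm 1 4 6 x y z - tripleForm 2 3 6 x y z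
    - tripleForm 2 4 5 x y z

/-- The standard inner product on ℝ⁷. -/
def inn (x y : Fin 7 → ℝ) : ℝ := ∑ i, x i * y i

/-- The cross product on ℝ⁷ determined by `ρ₀`: the unique vector with
`⟨x ⋆ y, z⟩ = ρ₀ (x, y, z)`; its `i`-th coordinate is `ρ₀ (x, y, eᵢ)`. -/
def cross (x y : Fin 7 → ℝ) : Fin 7 → ℝ := fun i => rho x y (Pi.single i 1)

/-- The octonion multiplication on `𝕆 = ℝ⁷ × ℝ`:
`(x,t)·(y,t') = (t·y + t'·x + x⋆y, t·t' − ⟨x,y⟩)`. -/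
def omul (a b : (Fin 7 → ℝ) × ℝ) : (Fin 7 → ℝ) × ℝ :=
  (a.2 • b.1 + b.2 • a.1 + cross a.1 b.1, a.2 * b.2 - inn a.1 b.1)

/-- The Euclidean norm `N (x, t) = |x|² + t²` on `𝕆 = ℝ⁷ × ℝ`. -/
def onorm (a : (Fin 7 → ℝ) × ℝ) : ℝ := inn a.1 a.1 + a.2 ^ 2

lemma cross_orth_left (x y : Fin 7 → ℝ) : inn (cross x y) x = 0 := by
  simp (config := { decide := true }) only [inn, cross, rho, tripleForm,
    Fin.sum_univ_seven, Pi.single_apply, if_true, if_false, mul_one, mul_zero,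
    sub_zero, zero_sub, add_zero, zero_add]
  ring

lemma cross_orth_right (x y : Fin 7 → ℝ) : inn (cross x y) y = 0 := by
  simp (config := { decide := true }) only [inn, cross, rho, tripleForm,
    Fin.sum_univ_seven, Pi.single_apply, if_true, if_false, mul_one, mul_zero,
    sub_zero, zero_sub, add_zero, zero_add]
  ring

lemma cross_norm (x y : Fin 7 → ℝ) :
    inn (cross x y) (cross x y) = inn x x * inn y y - inn x y ^ 2 := by
  simp (config := { decide := true }) only [inn, cross, rho, tripleForm,
    Fin.sum_univ_seven, Pi.single_apply, if_true, if_false, mul_one, mul_zero,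
    sub_zero, zero_sub, add_zero, zero_add]
  ring

/-- the Euclidean norm on the octonions `𝕆 = ℝ⁷ × ℝ` (with multiplication
built from the cross product of `rho`) is multiplicative: `N(a·b) = N(a)·N(b)`. -/
theorem stmt16 (a b : (Fin 7 → ℝ) × ℝ) : onorm (omul a b) = onorm a * onorm b := by
  have h1 := cross_orth_right a.1 b.1
  have h2 := cross_orth_left a.1 b.1
  have h3 := cross_norm a.1 b.1
  simp only [onorm, omul, inn, Fin.sum_univ_seven, Pi.add_apply, Pi.smul_apply,
    smul_eq_mul] at h1 h2 h3 ⊢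
  linear_combination 2 * a.2 * h1 + 2 * b.2 * h2 + h3
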